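/- arXiv:2508.20305 — 9 statements merged into one kernel-verified Lean document; each statement's English description precedes it below -/
import Mathlib

section
/- Let G' = (V', E', w') be the reduction graph built from a finite directed graph G = (V, E). Then for every undirected vertex cut (L', S', R') of G', either L' ⊆ V_out and R' ⊆ V_in, or L' ⊆ V_in and R' ⊆ V_out. -/
open scoped Classical

/-- `v_out`: the out-copy of a vertex `v`. -/
abbrev vOut {V : Type*} (v : V) : V ⊕ V := Sum.inl v

/-- `v_in`: the in-copy of a vertex `v`. -/
abbrev vIn {V : Type*} (v : V) : V ⊕ V := Sum.inr v

/-- `V_out`: the set of out-copies of vertices. -/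
def VOut (V : Type*) : Set (V ⊕ V) := Set.range Sum.inl

/-- `V_in`: the set of in-copies of vertices. -/
def VIn (V : Type*) : Set (V ⊕ V) := Set.range Sum.inr

/-- Adjacency relation of the reduction graph `G'` built from the directed edge set `E`:
a clique on `V_out`, a clique on `V_in`, the perfect matching `{v_out, v_in}`,
and an edge `{u_out, v_in}` for every directed edge `(u, v) ∈ E`. -/
def adj' {V : Type*} (E : Set (V × V)) : V ⊕ V → V ⊕ V → Prop
  | Sum.inl u, Sum.inl v => u ≠ v
  | Sum.inr u, Sum.inr v => u ≠ v
  | Sum.inl u, Sum.inr v => u = v ∨ (u, v) ∈ E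
  | Sum.inr u, Sum.inl v => v = u ∨ (v, u) ∈ E

/-- An undirected vertex cut `(L', S', R')` of the reduction graph `G'`:
pairwise disjoint sets covering all vertices, `L'` and `R'` nonempty, and no
edge of `G'` with one endpoint in `L'` and the other in `R'`. -/
structure IsUndirCut {V : Type*} (E : Set (V × V)) (L S R : Set (V ⊕ V)) : Prop where
  disjLS : Disjoint L S
  disjLR : Disjoint L R
  disjSR : Disjoint S R
  cover : L ∪ S ∪ R = Set.univ
  neL : L.Nonempty
  neR : R.Nonempty
  sep : ∀ x ∈ L, ∀ y ∈ R, ¬ adj' E x y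

/-- A directed vertex cut `(L, S, R)` of the directed graph `G = (V, E)`:
pairwise disjoint sets covering all vertices, `L` and `R` nonempty, and no
directed edge from `L` to `R`. -/
structure IsDirCut {V : Type*} (E : Set (V × V)) (L S R : Set V) : Prop where
  disjLS : Disjoint L S
  disjLR : Disjoint L R
  disjSR : Disjoint S R
  cover : L ∪ S ∪ R = Set.univ
  neL : L.Nonempty
  neR : R.Nonempty
  sep : ∀ u ∈ L, ∀ v ∈ R, (u, v) ∉ E

/-- Weight `w(X)` of a set of vertices of `G`. -/
noncomputable def wt {V : Type*} [Fintype V] (w : V → ℕ) (X : Set V) : ℕ :=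
  ∑ v ∈ X.toFinite.toFinset, w v

/-- Weight `w'(X)` of a set of vertices of `G'`, where `w'(v_out) = w'(v_in) = w(v)`. -/
noncomputable def wt' {V : Type*} [Fintype V] (w : V → ℕ) (X : Set (V ⊕ V)) : ℕ :=
  ∑ x ∈ X.toFinite.toFinset, Sum.elim w w x

/-- Neighborhood `N_{G'}(X)`: the vertices outside `X` adjacent in `G'` to some vertex of `X`. -/
def nbr' {V : Type*} (E : Set (V × V)) (X : Set (V ⊕ V)) : Set (V ⊕ V) :=
  {y | y ∉ X ∧ ∃ x ∈ X, adj' E x y}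

/-- In-neighborhood `N^in_G(R)` of a vertex set `R` in the directed graph `G`. -/
def NIn {V : Type*} (E : Set (V × V)) (R : Set V) : Set V :=
  {u | u ∉ R ∧ ∃ v ∈ R, (u, v) ∈ E}

/-- Proposition `prop:cuts-in-G'`: every undirected vertex cut
`(L', S', R')` of the reduction graph `G'` has `L' ⊆ V_out, R' ⊆ V_in` or
`L' ⊆ V_in, R' ⊆ V_out`. -/
theorem cuts_in_reduction_graph {V : Type*} [Fintype V] (E : Set (V × V))
    (hE : ∀ v : V, (v, v) ∉ E) (L' S' R' : Set (V ⊕ V))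
    (hcut : IsUndirCut E L' S' R') :
    (L' ⊆ VOut V ∧ R' ⊆ VIn V) ∨ (L' ⊆ VIn V ∧ R' ⊆ VOut V) := by
  have hdLR := hcut.disjLR
  by_cases h : ∃ u, Sum.inl u ∈ L'
  · obtain ⟨u, hu⟩ := h
    have hR : R' ⊆ VIn V := by
      rintro (v | v) hv
      · by_cases huv : u = v
        · exact absurd (Set.disjoint_left.mp hdLR (huv ▸ hu) hv) (fun h => h)
        · exact absurd huv (not_not.mpr (by
            have := hcut.sep _ hu _ hv
            simpa [adj'] using this))
      · exact ⟨v, rfl⟩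
    left
    refine ⟨?_, hR⟩
    rintro (x | x) hx
    · exact ⟨x, rfl⟩
    · exfalso
      obtain ⟨y, hy⟩ := hcut.neR
      obtain ⟨v, rfl⟩ := hR hy
      by_cases hxv : x = v
      · exact Set.disjoint_left.mp hdLR (hxv ▸ hx) hy
      · exact hcut.sep _ hx _ hy hxv
  · have hL : L' ⊆ VIn V := by
      rintro (x | x) hx
      · exact absurd ⟨x, hx⟩ h
      · exact ⟨x, rfl⟩
    right
    refine ⟨hL, ?_⟩
    rintro (v | v) hv
    · exact ⟨v, rfl⟩
    · exfalso
      obtain ⟨y, hy⟩ := hcut.neL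
      obtain ⟨u, rfl⟩ := hL hy
      by_cases huv : u = v
      · exact Set.disjoint_left.mp hdLR hy (huv ▸ hv)
      · exact hcut.sep _ hy _ hv huv
end

section
/- Let G' be the reduction graph built from a finite directed graph G = (V, E), and let (L', S', R') be an undirected vertex cut of G' with L' ⊆ V_out and R' ⊆ V_in. Define L = { v ∈ V : v_out ∈ L' } and R = { v ∈ V : v_in ∈ R' }. Then L and R are nonempty, L and R are disjoint, and there is no edge (u, v) ∈ E with u ∈ L and v ∈ R. -/
open scoped Classical

/-- Proposition `prop:cuts-wlog`: for an undirected vertex cut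
`(L', S', R')` of `G'` with `L' ⊆ V_out` and `R' ⊆ V_in`, the sets
`L = {v : v_out ∈ L'}` and `R = {v : v_in ∈ R'}` are nonempty and disjoint, and
there is no directed edge from `L` to `R`. -/
theorem cut_projection_properties {V : Type*} [Fintype V] (E : Set (V × V))
    (hE : ∀ v : V, (v, v) ∉ E) (L' S' R' : Set (V ⊕ V))
    (hcut : IsUndirCut E L' S' R') (hL : L' ⊆ VOut V) (hR : R' ⊆ VIn V) :
    {v : V | vOut v ∈ L'}.Nonempty ∧ {v : V | vIn v ∈ R'}.Nonempty ∧
      Disjoint {v : V | vOut v ∈ L'} {v : V | vIn v ∈ R'} ∧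
      ∀ u ∈ {v : V | vOut v ∈ L'}, ∀ v ∈ {v : V | vIn v ∈ R'}, (u, v) ∉ E := by
  refine ⟨?_, ?_, ?_, ?_⟩
  · obtain ⟨x, hx⟩ := hcut.neL
    obtain ⟨v, rfl⟩ := hL hx
    exact ⟨v, hx⟩
  · obtain ⟨x, hx⟩ := hcut.neR
    obtain ⟨v, rfl⟩ := hR hx
    exact ⟨v, hx⟩
  · rw [Set.disjoint_left]
    intro v hv hv'
    exact hcut.sep _ hv _ hv' (Or.inl rfl)
  · intro u hu v hv hE'
    exact hcut.sep _ hu _ hv (Or.inr hE')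
end

section
/- Let G = (V, E, w) be a finite directed graph with positive integer vertex weights and let G' = (V', E', w') be its reduction graph. Let ∅ ≠ R_in ⊆ V_in and let R = { v ∈ V : v_in ∈ R_in }. Then w'(N_{G'}(R_in)) = w(N^in_G(R)) + w(V), where N^in_G(R) = { u ∈ V \ R : there exists v ∈ R with (u, v) ∈ E }. -/
open scoped Classical

lemma wt_union_disj {V : Type*} [Fintype V] (w : V → ℕ) (A B : Set V)
    (h : Disjoint A B) : wt w (A ∪ B) = wt w A + wt w B := by
  unfold wt
  rw [← Finset.sum_union]
  · congr 1
    ext x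
    rw [Set.Finite.mem_toFinset, Finset.mem_union, Set.Finite.mem_toFinset,
      Set.Finite.mem_toFinset, Set.mem_union]
  · rw [Finset.disjoint_left]
    intro a ha hb
    simp only [Set.Finite.mem_toFinset] at ha hb
    exact h.le_bot ⟨ha, hb⟩

lemma wt'_images {V : Type*} [Fintype V] (w : V → ℕ) (A B : Set V) :
    wt' w (Sum.inl '' A ∪ Sum.inr '' B) = wt w A + wt w B := by
  unfold wt' wt
  have : (Sum.inl '' A ∪ Sum.inr '' B : Set (V ⊕ V)).toFinite.toFinset
      = A.toFinite.toFinset.image Sum.inl ∪ B.toFinite.toFinset.image Sum.inr := by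
    ext x
    rw [Set.Finite.mem_toFinset, Finset.mem_union, Finset.mem_image, Finset.mem_image,
      Set.mem_union, Set.mem_image, Set.mem_image]
    simp only [Set.Finite.mem_toFinset]
  rw [this, Finset.sum_union]
  · rw [Finset.sum_image (by intro a _ b _ h; exact Sum.inl.inj h),
        Finset.sum_image (by intro a _ b _ h; exact Sum.inr.inj h)]
    simp
  · rw [Finset.disjoint_left]
    intro a ha hb
    simp only [Finset.mem_image] at ha hb
    obtain ⟨x, _, rfl⟩ := ha
    obtain ⟨y, _, h⟩ := hb
    cases h

/-- Lemma `lemma:neighbors-G'-G`: for `∅ ≠ R_in ⊆ V_in` and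
`R = {v : v_in ∈ R_in}`, we have `w'(N_{G'}(R_in)) = w(N^in_G(R)) + w(V)`. -/
theorem weight_neighbors_reduction {V : Type*} [Fintype V] (E : Set (V × V))
    (hE : ∀ v : V, (v, v) ∉ E) (w : V → ℕ) (hw : ∀ v : V, 1 ≤ w v)
    (R_in : Set (V ⊕ V)) (hne : R_in.Nonempty) (hsub : R_in ⊆ VIn V) :
    wt' w (nbr' E R_in) = wt w (NIn E {v : V | vIn v ∈ R_in}) + wt w Set.univ := by
  set R : Set V := {v : V | vIn v ∈ R_in} with hR
  have key : nbr' E R_in = Sum.inl '' (R ∪ NIn E R) ∪ Sum.inr '' Rᶜ := by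
    ext x
    cases x with
    | inl u =>
      simp only [nbr', Set.mem_setOf_eq, Set.mem_union, Set.mem_image]
      constructor
      · rintro ⟨-, y, hy, hadj⟩
        obtain ⟨v, rfl⟩ := hsub hy
        left
        refine ⟨u, ?_, rfl⟩
        rcases hadj with h | h
        · left; rw [hR]; simpa [h] using hy
        · by_cases hu : u ∈ R
          · exact Or.inl hu
          · exact Or.inr ⟨hu, v, hy, h⟩
      · rintro (⟨a, ha, ha'⟩ | ⟨a, _, ha'⟩)
        · cases ha'
          have hnot : Sum.inl u ∉ R_in := fun h => by
            obtain ⟨v, hv⟩ := hsub h; cases hv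
          refine ⟨hnot, ?_⟩
          rcases ha with h | ⟨_, v, hv, he⟩
          · exact ⟨Sum.inr u, h, Or.inl rfl⟩
          · exact ⟨Sum.inr v, hv, Or.inr he⟩
        · exact absurd ha' (fun h => by cases h)
    | inr u =>
      simp only [nbr', Set.mem_setOf_eq, Set.mem_union, Set.mem_image]
      constructor
      · rintro ⟨hnot, -⟩
        right
        exact ⟨u, hnot, rfl⟩
      · rintro (⟨a, _, ha'⟩ | ⟨a, ha, ha'⟩)
        · exact absurd ha' (fun h => by cases h)
        · cases ha'
          refine ⟨ha, ?_⟩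
          obtain ⟨y, hy⟩ := hne
          obtain ⟨v, rfl⟩ := hsub hy
          have huv : v ≠ u := fun h => ha (h ▸ hy)
          exact ⟨Sum.inr v, hy, huv⟩
  rw [key, wt'_images, wt_union_disj w R (NIn E R) (by
    rw [Set.disjoint_left]; intro a ha hb; exact hb.1 ha)]
  have : wt w R + wt w Rᶜ = wt w Set.univ := by
    rw [← wt_union_disj w R Rᶜ disjoint_compl_right, Set.union_compl_self]
  omega
end

section
/- Let G = (V, E, w) be a finite directed graph with positive integer vertex weights and let G' be its reduction graph. For every undirected vertex cut (L', S', R') of G', there exists a directed vertex cut (L, S, R) of G with w(S) + w(V) ≤ w'(S'). -/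
open scoped Classical

lemma wt_eq {V : Type*} [Fintype V] (w : V → ℕ) (X : Set V) :
    wt w X = ∑ v : V, if v ∈ X then w v else 0 := by
  rw [wt, show X.toFinite.toFinset = Finset.univ.filter (· ∈ X) by ext v; simp,
    Finset.sum_filter]

lemma wt'_eq {V : Type*} [Fintype V] (w : V → ℕ) (X : Set (V ⊕ V)) :
    wt' w X = (∑ v : V, if vOut v ∈ X then w v else 0)
      + (∑ v : V, if vIn v ∈ X then w v else 0) := by
  rw [wt', show X.toFinite.toFinset = Finset.univ.filter (· ∈ X) by ext x; simp,
    Finset.sum_filter, Fintype.sum_sum_type]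
  simp [vOut, vIn]

lemma helper_cut {V : Type*} [Fintype V] (E : Set (V × V)) (w : V → ℕ)
    (A S' B : Set (V ⊕ V)) (hAo : A ⊆ VOut V) (hBi : B ⊆ VIn V)
    (hAS : Disjoint A S') (hSB : Disjoint S' B)
    (hcov : A ∪ S' ∪ B = Set.univ) (hA : A.Nonempty) (hB : B.Nonempty)
    (hsep : ∀ x ∈ A, ∀ y ∈ B, ¬ adj' E x y) :
    ∃ L S R : Set V, IsDirCut E L S R ∧ wt w S + wt w Set.univ ≤ wt' w S' := by
  set L : Set V := {v | vOut v ∈ A} with hL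
  set R : Set V := {v | vIn v ∈ B} with hR
  set S : Set V := (L ∪ R)ᶜ with hS
  have houtB : ∀ v : V, vOut v ∉ B := by
    intro v hv; rcases hBi hv with ⟨u, hu⟩; exact Sum.inr_ne_inl hu
  have hinA : ∀ v : V, vIn v ∉ A := by
    intro v hv; rcases hAo hv with ⟨u, hu⟩; exact Sum.inl_ne_inr hu
  have hLR : Disjoint L R := by
    rw [Set.disjoint_left]
    intro v hvL hvR
    exact hsep _ hvL _ hvR (Or.inl rfl)
  have hcov' : ∀ x : V ⊕ V, x ∈ A ∨ x ∈ S' ∨ x ∈ B := by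
    intro x
    have : x ∈ A ∪ S' ∪ B := hcov ▸ Set.mem_univ x
    rcases this with (h | h) | h
    · exact Or.inl h
    · exact Or.inr (Or.inl h)
    · exact Or.inr (Or.inr h)
  refine ⟨L, S, R, ⟨?_, hLR, ?_, ?_, ?_, ?_, ?_⟩, ?_⟩
  · rw [Set.disjoint_left]; intro v hv hvS; exact hvS (Or.inl hv)
  · rw [Set.disjoint_right]; intro v hv hvS; exact hvS (Or.inr hv)
  · ext v; simp only [hS, Set.mem_union, Set.mem_compl_iff, Set.mem_univ, iff_true]
    tauto
  · rcases hA with ⟨x, hx⟩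
    rcases hAo hx with ⟨a, rfl⟩
    exact ⟨a, hx⟩
  · rcases hB with ⟨y, hy⟩
    rcases hBi hy with ⟨b, rfl⟩
    exact ⟨b, hy⟩
  · intro u hu v hv huv
    exact hsep _ hu _ hv (Or.inr huv)
  · -- weight inequality
    rw [wt_eq, wt_eq, wt'_eq]
    have key : ∀ v : V,
        (if v ∈ S then w v else 0) + (if v ∈ (Set.univ : Set V) then w v else 0)
          ≤ (if vOut v ∈ S' then w v else 0) + (if vIn v ∈ S' then w v else 0) := by
      intro v
      simp only [Set.mem_univ, if_true]
      by_cases hvS : v ∈ S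
      · have hnL : v ∉ L := fun h => hvS (Or.inl h)
        have hnR : v ∉ R := fun h => hvS (Or.inr h)
        have h1 : vOut v ∈ S' := by
          rcases hcov' (vOut v) with h | h | h
          · exact absurd h hnL
          · exact h
          · exact absurd h (houtB v)
        have h2 : vIn v ∈ S' := by
          rcases hcov' (vIn v) with h | h | h
          · exact absurd h (hinA v)
          · exact h
          · exact absurd h hnR
        simp [hvS, h1, h2]
      · have : vOut v ∈ S' ∨ vIn v ∈ S' := by
          rcases hcov' (vOut v) with h | h | h
          · right
            rcases hcov' (vIn v) with h' | h' | h'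
            · exact absurd h' (hinA v)
            · exact h'
            · exact absurd (hsep _ h _ h' (Or.inl rfl)) (fun q => q)
          · exact Or.inl h
          · exact absurd h (houtB v)
        rcases this with h | h <;> simp [hvS, h] <;> split <;> omega
    rw [← Finset.sum_add_distrib, ← Finset.sum_add_distrib]
    exact Finset.sum_le_sum fun v _ => by convert key v using 3 <;> rfl

/-- from every undirected vertex cut `(L', S', R')` of the
reduction graph `G'`, one obtains a directed vertex cut `(L, S, R)` of `G` with
`w(S) + w(V) ≤ w'(S')`. -/
theorem dir_cut_from_undir_cut {V : Type*} [Fintype V] (E : Set (V × V))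
    (hE : ∀ v : V, (v, v) ∉ E) (w : V → ℕ) (hw : ∀ v : V, 1 ≤ w v)
    (L' S' R' : Set (V ⊕ V)) (hcut : IsUndirCut E L' S' R') :
    ∃ L S R : Set V, IsDirCut E L S R ∧ wt w S + wt w Set.univ ≤ wt' w S' := by
  obtain ⟨dLS, dLR, dSR, cov, neL, neR, sep⟩ := hcut
  have hne : ∀ x ∈ L', ∀ y ∈ R', x ≠ y := by
    intro x hx y hy h
    exact (Set.disjoint_left.mp dLR hx) (h ▸ hy)
  rcases neL with ⟨x₀, hx₀⟩
  rcases neR with ⟨y₀, hy₀⟩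
  have hcases : (L' ⊆ VOut V ∧ R' ⊆ VIn V) ∨ (L' ⊆ VIn V ∧ R' ⊆ VOut V) := by
    cases x₀ with
    | inl a =>
      left
      have hRin : R' ⊆ VIn V := by
        rintro (b | b) hb
        · have h := sep _ hx₀ _ hb
          simp only [adj', not_ne_iff] at h
          exact ((hne _ hx₀ _ hb) (by rw [h])).elim
        · exact ⟨b, rfl⟩
      refine ⟨?_, hRin⟩
      rintro (c | c) hc
      · exact ⟨c, rfl⟩
      · rcases hRin hy₀ with ⟨d, hd⟩
        subst hd
        have h := sep _ hc _ hy₀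
        simp only [adj', not_ne_iff] at h
        exact ((hne _ hc _ hy₀) (by rw [h])).elim
    | inr a =>
      right
      have hRout : R' ⊆ VOut V := by
        rintro (b | b) hb
        · exact ⟨b, rfl⟩
        · have h := sep _ hx₀ _ hb
          simp only [adj', not_ne_iff] at h
          exact ((hne _ hx₀ _ hb) (by rw [h])).elim
      refine ⟨?_, hRout⟩
      rintro (c | c) hc
      · rcases hRout hy₀ with ⟨d, hd⟩
        subst hd
        have h := sep _ hc _ hy₀
        simp only [adj', not_ne_iff] at h
        exact ((hne _ hc _ hy₀) (by rw [h])).elim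
      · exact ⟨c, rfl⟩
  rcases hcases with ⟨hLo, hRi⟩ | ⟨hLi, hRo⟩
  · exact helper_cut E w L' S' R' hLo hRi dLS dSR cov ⟨x₀, hx₀⟩ ⟨y₀, hy₀⟩ sep
  · refine helper_cut E w R' S' L' hRo hLi dSR.symm dLS.symm ?_ ⟨y₀, hy₀⟩ ⟨x₀, hx₀⟩ ?_
    · rw [← cov]; ext z; simp [Set.mem_union]; tauto
    · intro x hx y hy hadj
      apply sep _ hy _ hx
      rcases hRo hx with ⟨u, hu⟩
      rcases hLi hy with ⟨v, hv⟩
      subst hu; subst hv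
      exact hadj
end

section
/- Let G = (V, E, w) be a finite directed graph with positive integer vertex weights that admits at least one directed vertex cut (i.e., G is not complete as a directed graph), and let G' be its reduction graph. Then κ_{G'} = κ_G + w(V), where κ_G is the minimum weight w(S) over all directed vertex cuts (L, S, R) of G and κ_{G'} is the minimum weight w'(S') over all undirected vertex cuts (L', S', R') of G'. -/
open scoped Classical

section Aux
variable {V : Type*} [Fintype V]

lemma wt_sum (w : V → ℕ) (X : Set V) :
    wt w X = ∑ v, if v ∈ X then w v else 0 := by
  rw [wt, ← Finset.sum_filter]
  congr 1
  ext v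
  simp

lemma wt'_sum (w : V → ℕ) (X : Set (V ⊕ V)) :
    wt' w X = ∑ v, ((if Sum.inl v ∈ X then w v else 0) + (if Sum.inr v ∈ X then w v else 0)) := by
  have h : wt' w X = ∑ x : V ⊕ V, if x ∈ X then Sum.elim w w x else 0 := by
    rw [wt', ← Finset.sum_filter]
    congr 1
    ext x
    simp
  rw [h, Fintype.sum_sum_type, Finset.sum_add_distrib]
  simp

/-- weight of the S' built from a directed cut -/
lemma wt'_of_dir (w : V → ℕ) {E : Set (V × V)} {L S R : Set V} (hc : IsDirCut E L S R) :
    wt' w (Sum.inl '' (S ∪ R) ∪ Sum.inr '' (L ∪ S)) = wt w S + wt w Set.univ := by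
  rw [wt'_sum, wt_sum, wt_sum, ← Finset.sum_add_distrib]
  apply Finset.sum_congr rfl
  intro v _
  have hcov : v ∈ L ∨ v ∈ S ∨ v ∈ R := by
    have := hc.cover.symm ▸ Set.mem_univ v
    simpa [Set.mem_union, or_assoc] using this
  have h1 : (Sum.inl v ∈ Sum.inl '' (S ∪ R) ∪ Sum.inr '' (L ∪ S)) ↔ v ∈ S ∪ R := by
    simp
  have h2 : (Sum.inr v ∈ Sum.inl '' (S ∪ R) ∪ Sum.inr '' (L ∪ S)) ↔ v ∈ L ∪ S := by
    simp
  simp only [h1, h2]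
  rcases hcov with h | h | h
  · have h1 : v ∉ S := Set.disjoint_left.mp hc.disjLS h
    have h2 : v ∉ R := Set.disjoint_left.mp hc.disjLR h
    simp [h, h1, h2]
  · simp [h]
  · have h1 : v ∉ S := fun hv => Set.disjoint_left.mp hc.disjSR hv h
    have h2 : v ∉ L := fun hv => Set.disjoint_left.mp hc.disjLR hv h
    simp [h, h1, h2]

/-- weight of S' in terms of the extracted directed cut data -/
lemma wt'_eq_compl (w : V → ℕ) {A B : Set V} (hAB : Disjoint A B) {S' : Set (V ⊕ V)}
    (h1 : ∀ v, Sum.inl v ∈ S' ↔ v ∉ A) (h2 : ∀ v, Sum.inr v ∈ S' ↔ v ∉ B) :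
    wt' w S' = wt w (A ∪ B)ᶜ + wt w Set.univ := by
  rw [wt'_sum, wt_sum, wt_sum, ← Finset.sum_add_distrib]
  apply Finset.sum_congr rfl
  intro v _
  simp only [h1 v, h2 v]
  by_cases hA : v ∈ A
  · have hB : v ∉ B := Set.disjoint_left.mp hAB hA
    simp [hA, hB]
  · by_cases hB : v ∈ B
    · simp [hA, hB]
    · simp [hA, hB]

/-- the extracted directed cut -/
lemma isDirCut_of (E : Set (V × V)) {A B : Set V} (hAB : Disjoint A B)
    (hAne : A.Nonempty) (hBne : B.Nonempty)
    (hsep : ∀ u ∈ A, ∀ v ∈ B, (u, v) ∉ E) :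
    IsDirCut E A (A ∪ B)ᶜ B where
  disjLS := by
    rw [Set.disjoint_left]
    intro a ha hac
    exact hac (Or.inl ha)
  disjLR := hAB
  disjSR := by
    rw [Set.disjoint_left]
    intro a ha hb
    exact ha (Or.inr hb)
  cover := by
    ext v
    simp only [Set.mem_union, Set.mem_compl_iff, Set.mem_univ, iff_true]
    tauto
  neL := hAne
  neR := hBne
  sep := hsep

end Aux


/-- Lemma `lemma:min-cut-G'-G`: if `G` admits a directed vertex
cut, then `κ_{G'} = κ_G + w(V)`, where `κ_G` (resp. `κ_{G'}`) is the minimum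
weight of a directed vertex cut of `G` (resp. undirected vertex cut of `G'`). -/
theorem global_min_cut_reduction {V : Type*} [Fintype V] (E : Set (V × V))
    (hE : ∀ v : V, (v, v) ∉ E) (w : V → ℕ) (hw : ∀ v : V, 1 ≤ w v)
    (hex : ∃ L S R : Set V, IsDirCut E L S R) :
    sInf {k : ℕ | ∃ L' S' R' : Set (V ⊕ V), IsUndirCut E L' S' R' ∧ k = wt' w S'} =
      sInf {k : ℕ | ∃ L S R : Set V, IsDirCut E L S R ∧ k = wt w S} + wt w Set.univ := by
  set DSet := {k : ℕ | ∃ L S R : Set V, IsDirCut E L S R ∧ k = wt w S} with hDSet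
  set USet := {k : ℕ | ∃ L' S' R' : Set (V ⊕ V), IsUndirCut E L' S' R' ∧ k = wt' w S'} with hUSet
  -- from any directed cut we get an undirected cut of weight wt S + wt univ
  have build : ∀ {L S R : Set V}, IsDirCut E L S R →
      (wt w S + wt w Set.univ) ∈ USet := by
    intro L S R hc
    refine ⟨Sum.inl '' L, Sum.inl '' (S ∪ R) ∪ Sum.inr '' (L ∪ S), Sum.inr '' R, ?_, (wt'_of_dir w hc).symm⟩
    have hLS := Set.disjoint_left.mp hc.disjLS
    have hLR := Set.disjoint_left.mp hc.disjLR
    have hSR := Set.disjoint_left.mp hc.disjSR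
    refine ⟨?_, ?_, ?_, ?_, hc.neL.image _, hc.neR.image _, ?_⟩
    · rw [Set.disjoint_left]
      rintro x ⟨a, ha, rfl⟩ (⟨b, hb, hba⟩ | ⟨b, hb, hba⟩)
      · cases Sum.inl_injective hba
        rcases hb with hb | hb
        exacts [hLS ha hb, hLR ha hb]
      · exact Sum.inl_ne_inr hba.symm
    · rw [Set.disjoint_left]
      rintro x ⟨a, ha, rfl⟩ ⟨b, hb, hba⟩
      exact Sum.inl_ne_inr hba.symm
    · rw [Set.disjoint_left]
      rintro x (⟨a, ha, rfl⟩ | ⟨a, ha, rfl⟩) ⟨b, hb, hba⟩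
      · exact Sum.inl_ne_inr hba.symm
      · cases Sum.inr_injective hba
        rcases ha with ha | ha
        exacts [hLR ha hb, hSR ha hb]
    · ext x
      have hcov : ∀ v : V, v ∈ L ∨ v ∈ S ∨ v ∈ R := by
        intro v
        have := hc.cover.symm ▸ Set.mem_univ v
        simpa [Set.mem_union, or_assoc] using this
      cases x with
      | inl a =>
        simp only [Set.mem_union, Set.mem_image, Set.mem_univ, iff_true]
        rcases hcov a with h | h | h
        · exact Or.inl (Or.inl ⟨a, h, rfl⟩)
        · exact Or.inl (Or.inr (Or.inl ⟨a, Or.inl h, rfl⟩))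
        · exact Or.inl (Or.inr (Or.inl ⟨a, Or.inr h, rfl⟩))
      | inr a =>
        simp only [Set.mem_union, Set.mem_image, Set.mem_univ, iff_true]
        rcases hcov a with h | h | h
        · exact Or.inl (Or.inr (Or.inr ⟨a, Or.inl h, rfl⟩))
        · exact Or.inl (Or.inr (Or.inr ⟨a, Or.inr h, rfl⟩))
        · exact Or.inr ⟨a, h, rfl⟩
    · rintro x ⟨u, hu, rfl⟩ y ⟨v, hv, rfl⟩ hadj
      rcases hadj with rfl | hE'
      · exact hLR hu hv
      · exact hc.sep u hu v hv hE'
  -- nonemptiness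
  obtain ⟨L₀, S₀, R₀, hc₀⟩ := hex
  have hDne : DSet.Nonempty := ⟨wt w S₀, L₀, S₀, R₀, hc₀, rfl⟩
  have hUne : USet.Nonempty := ⟨_, build hc₀⟩
  apply le_antisymm
  · -- κ_{G'} ≤ κ_G + w(V)
    obtain ⟨L, S, R, hc, hk⟩ := Nat.sInf_mem hDne
    rw [hk]
    exact Nat.sInf_le (build hc)
  · -- κ_G + w(V) ≤ κ_{G'}
    obtain ⟨L', S', R', hc', hk⟩ := Nat.sInf_mem hUne
    rw [hk]
    -- S' is the complement of L' ∪ R'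
    have hS' : ∀ x, x ∈ S' ↔ x ∉ L' ∧ x ∉ R' := by
      intro x
      constructor
      · intro hx
        exact ⟨fun h => Set.disjoint_left.mp hc'.disjLS h hx,
               fun h => Set.disjoint_left.mp hc'.disjSR hx h⟩
      · rintro ⟨h1, h2⟩
        have := hc'.cover.symm ▸ Set.mem_univ x
        rcases this with (h | h) | h
        exacts [absurd h h1, h, absurd h h2]
    -- the two sides can't both meet VOut, nor both VIn
    have houtLR : ∀ a b : V, Sum.inl a ∈ L' → Sum.inl b ∈ R' → False := by
      intro a b ha hb
      have hne : a ≠ b := by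
        rintro rfl
        exact Set.disjoint_left.mp hc'.disjLR ha hb
      exact hc'.sep _ ha _ hb hne
    have hinLR : ∀ a b : V, Sum.inr a ∈ L' → Sum.inr b ∈ R' → False := by
      intro a b ha hb
      have hne : a ≠ b := by
        rintro rfl
        exact Set.disjoint_left.mp hc'.disjLR ha hb
      exact hc'.sep _ ha _ hb hne
    by_cases hcase : ∃ a : V, Sum.inl a ∈ L'
    · -- L' ⊆ VOut, R' ⊆ VIn
      obtain ⟨a₀, ha₀⟩ := hcase
      have hRin : ∀ x ∈ R', ∃ b : V, x = Sum.inr b := by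
        intro x hx
        cases x with
        | inl b => exact absurd (houtLR a₀ b ha₀ hx) not_false
        | inr b => exact ⟨b, rfl⟩
      obtain ⟨y₀, hy₀⟩ := hc'.neR
      obtain ⟨b₀, rfl⟩ := hRin y₀ hy₀
      have hLout : ∀ x ∈ L', ∃ a : V, x = Sum.inl a := by
        intro x hx
        cases x with
        | inl a => exact ⟨a, rfl⟩
        | inr a => exact absurd (hinLR a b₀ hx hy₀) not_false
      set A := Sum.inl ⁻¹' L' with hA
      set B := Sum.inr ⁻¹' R' with hB
      have hABdisj : Disjoint A B := by
        rw [Set.disjoint_left]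
        intro v hvA hvB
        exact hc'.sep _ hvA _ hvB (Or.inl rfl)
      have hsep : ∀ u ∈ A, ∀ v ∈ B, (u, v) ∉ E := by
        intro u hu v hv hE'
        exact hc'.sep _ hu _ hv (Or.inr hE')
      have hdc : IsDirCut E A (A ∪ B)ᶜ B :=
        isDirCut_of E hABdisj ⟨a₀, ha₀⟩ ⟨b₀, hy₀⟩ hsep
      have h1 : ∀ v, Sum.inl v ∈ S' ↔ v ∉ A := by
        intro v
        rw [hS']
        constructor
        · exact fun h => h.1
        · intro h
          refine ⟨h, fun hr => ?_⟩
          obtain ⟨b, hb⟩ := hRin _ hr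
          exact Sum.inl_ne_inr hb
      have h2 : ∀ v, Sum.inr v ∈ S' ↔ v ∉ B := by
        intro v
        rw [hS']
        constructor
        · exact fun h => h.2
        · intro h
          refine ⟨fun hl => ?_, h⟩
          obtain ⟨a, ha⟩ := hLout _ hl
          exact Sum.inl_ne_inr ha.symm
      rw [wt'_eq_compl w hABdisj h1 h2]
      have : sInf DSet ≤ wt w (A ∪ B)ᶜ := Nat.sInf_le ⟨A, (A ∪ B)ᶜ, B, hdc, rfl⟩
      omega
    · -- L' ⊆ VIn, R' ⊆ VOut
      push_neg at hcase
      have hLin : ∀ x ∈ L', ∃ a : V, x = Sum.inr a := by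
        intro x hx
        cases x with
        | inl a => exact absurd hx (hcase a)
        | inr a => exact ⟨a, rfl⟩
      obtain ⟨x₀, hx₀⟩ := hc'.neL
      obtain ⟨a₀, rfl⟩ := hLin x₀ hx₀
      have hRout : ∀ x ∈ R', ∃ b : V, x = Sum.inl b := by
        intro x hx
        cases x with
        | inl b => exact ⟨b, rfl⟩
        | inr b => exact absurd (hinLR a₀ b hx₀ hx) not_false
      obtain ⟨y₀, hy₀⟩ := hc'.neR
      obtain ⟨b₀, rfl⟩ := hRout y₀ hy₀
      set A := Sum.inl ⁻¹' R' with hA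
      set B := Sum.inr ⁻¹' L' with hB
      have hABdisj : Disjoint A B := by
        rw [Set.disjoint_left]
        intro v hvA hvB
        exact hc'.sep _ hvB _ hvA (Or.inl rfl)
      have hsep : ∀ u ∈ A, ∀ v ∈ B, (u, v) ∉ E := by
        intro u hu v hv hE'
        exact hc'.sep _ hv _ hu (Or.inr hE')
      have hdc : IsDirCut E A (A ∪ B)ᶜ B :=
        isDirCut_of E hABdisj ⟨b₀, hy₀⟩ ⟨a₀, hx₀⟩ hsep
      have h1 : ∀ v, Sum.inl v ∈ S' ↔ v ∉ A := by
        intro v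
        rw [hS']
        constructor
        · exact fun h => h.2
        · intro h
          refine ⟨fun hl => ?_, h⟩
          obtain ⟨a, ha⟩ := hLin _ hl
          exact Sum.inl_ne_inr ha
      have h2 : ∀ v, Sum.inr v ∈ S' ↔ v ∉ B := by
        intro v
        rw [hS']
        constructor
        · exact fun h => h.1
        · intro h
          refine ⟨h, fun hr => ?_⟩
          obtain ⟨b, hb⟩ := hRout _ hr
          exact Sum.inl_ne_inr hb.symm
      rw [wt'_eq_compl w hABdisj h1 h2]
      have : sInf DSet ≤ wt w (A ∪ B)ᶜ := Nat.sInf_le ⟨A, (A ∪ B)ᶜ, B, hdc, rfl⟩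
      omega
end

section
/- Let G = (V, E, w) be a finite directed graph with positive integer vertex weights and let G' be its reduction graph. Let s, t ∈ V with s ≠ t and (s, t) ∉ E. For every directed vertex cut (L, S, R) of G with s ∈ L and t ∈ R, there exists an undirected vertex cut (L', S', R') of G' with s_out ∈ L', t_in ∈ R', and w'(S') ≤ w(S) + w(V). -/
open scoped Classical

lemma wt_union_disjoint {V : Type*} [Fintype V] (w : V → ℕ) {A B : Set V}
    (h : Disjoint A B) : wt w (A ∪ B) = wt w A + wt w B := by
  unfold wt
  rw [← Finset.sum_union]
  · congr 1
    ext x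
    simp only [Set.Finite.mem_toFinset, Finset.mem_union, Set.mem_union]
  · rw [Finset.disjoint_left]
    intro x hx hy
    simp only [Set.Finite.mem_toFinset] at hx hy
    exact h.le_bot ⟨hx, hy⟩

lemma wt'_union_disjoint {V : Type*} [Fintype V] (w : V → ℕ) {A B : Set (V ⊕ V)}
    (h : Disjoint A B) : wt' w (A ∪ B) = wt' w A + wt' w B := by
  unfold wt'
  rw [← Finset.sum_union]
  · congr 1
    ext x
    simp only [Set.Finite.mem_toFinset, Finset.mem_union, Set.mem_union]
  · rw [Finset.disjoint_left]
    intro x hx hy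
    simp only [Set.Finite.mem_toFinset] at hx hy
    exact h.le_bot ⟨hx, hy⟩

lemma wt'_inl {V : Type*} [Fintype V] (w : V → ℕ) (A : Set V) :
    wt' w (Sum.inl '' A) = wt w A := by
  unfold wt' wt
  have h : (Set.toFinite (Sum.inl '' A : Set (V ⊕ V))).toFinset
      = A.toFinite.toFinset.image Sum.inl := by
    ext x; simp [Set.Finite.mem_toFinset]
  rw [h, Finset.sum_image (by intro x _ y _ h; exact Sum.inl.inj h)]
  simp

lemma wt'_inr {V : Type*} [Fintype V] (w : V → ℕ) (A : Set V) :
    wt' w (Sum.inr '' A) = wt w A := by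
  unfold wt' wt
  have h : (Set.toFinite (Sum.inr '' A : Set (V ⊕ V))).toFinset
      = A.toFinite.toFinset.image Sum.inr := by
    ext x; simp [Set.Finite.mem_toFinset]
  rw [h, Finset.sum_image (by intro x _ y _ h; exact Sum.inr.inj h)]
  simp

/-- for `s ≠ t` with `(s, t) ∉ E`, from every directed vertex
cut `(L, S, R)` of `G` with `s ∈ L` and `t ∈ R`, one obtains an undirected
vertex cut `(L', S', R')` of `G'` with `s_out ∈ L'`, `t_in ∈ R'`, and
`w'(S') ≤ w(S) + w(V)`. -/
theorem undir_st_cut_from_dir_cut {V : Type*} [Fintype V] (E : Set (V × V))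
    (hE : ∀ v : V, (v, v) ∉ E) (w : V → ℕ) (hw : ∀ v : V, 1 ≤ w v)
    (s t : V) (hst : s ≠ t) (hstE : (s, t) ∉ E)
    (L S R : Set V) (hcut : IsDirCut E L S R) (hs : s ∈ L) (ht : t ∈ R) :
    ∃ L' S' R' : Set (V ⊕ V), IsUndirCut E L' S' R' ∧ vOut s ∈ L' ∧ vIn t ∈ R' ∧
      wt' w S' ≤ wt w S + wt w Set.univ := by
  obtain ⟨dLS, dLR, dSR, cov, _, _, sep⟩ := hcut
  refine ⟨Sum.inl '' L, Sum.inl '' (S ∪ R) ∪ Sum.inr '' (L ∪ S), Sum.inr '' R, ?_, ⟨s, hs, rfl⟩,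
    ⟨t, ht, rfl⟩, ?_⟩
  · constructor
    · rw [Set.disjoint_union_right]
      constructor
      · rw [Set.disjoint_image_iff Sum.inl_injective]
        rw [Set.disjoint_union_right]; exact ⟨dLS, dLR⟩
      · rw [Set.disjoint_left]; rintro _ ⟨x, _, rfl⟩ ⟨y, _, h⟩; exact Sum.inl_ne_inr h.symm
    · rw [Set.disjoint_left]; rintro _ ⟨x, _, rfl⟩ ⟨y, _, h⟩; exact Sum.inl_ne_inr h.symm
    · rw [Set.disjoint_union_left]
      constructor
      · rw [Set.disjoint_left]; rintro _ ⟨x, _, rfl⟩ ⟨y, _, h⟩; exact Sum.inl_ne_inr h.symm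
      · rw [Set.disjoint_image_iff Sum.inr_injective]
        rw [Set.disjoint_union_left]; exact ⟨dLR, dSR⟩
    · ext x
      simp only [Set.mem_union, Set.mem_image, Set.mem_univ, iff_true]
      rcases x with v | v
      · have : v ∈ L ∪ S ∪ R := cov ▸ Set.mem_univ v
        rcases this with (h | h) | h
        · exact Or.inl (Or.inl ⟨v, h, rfl⟩)
        · exact Or.inl (Or.inr (Or.inl ⟨v, Or.inl h, rfl⟩))
        · exact Or.inl (Or.inr (Or.inl ⟨v, Or.inr h, rfl⟩))
      · have : v ∈ L ∪ S ∪ R := cov ▸ Set.mem_univ v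
        rcases this with (h | h) | h
        · exact Or.inl (Or.inr (Or.inr ⟨v, Or.inl h, rfl⟩))
        · exact Or.inl (Or.inr (Or.inr ⟨v, Or.inr h, rfl⟩))
        · exact Or.inr ⟨v, h, rfl⟩
    · exact ⟨_, s, hs, rfl⟩
    · exact ⟨_, t, ht, rfl⟩
    · rintro _ ⟨u, hu, rfl⟩ _ ⟨v, hv, rfl⟩ hadj
      rcases hadj with rfl | hadj
      · exact dLR.le_bot ⟨hu, hv⟩
      · exact sep u hu v hv hadj
  · have hd1 : Disjoint (Sum.inl '' (S ∪ R) : Set (V ⊕ V)) (Sum.inr '' (L ∪ S)) := by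
      rw [Set.disjoint_left]; rintro _ ⟨x, _, rfl⟩ ⟨y, _, h⟩; exact Sum.inl_ne_inr h.symm
    rw [wt'_union_disjoint w hd1, wt'_inl, wt'_inr, wt_union_disjoint w dSR,
      wt_union_disjoint w dLS]
    have : wt w Set.univ = wt w L + wt w S + wt w R := by
      rw [← wt_union_disjoint w dLS, ← wt_union_disjoint w (by
        rw [Set.disjoint_union_left]; exact ⟨dLR, dSR⟩), cov]
    omega
end

section
/- Let G' be the reduction graph built from a finite directed graph G = (V, E), and let s ∈ V. Then for every undirected vertex cut (L', S', R') of G' with s_out ∈ L', we have L' ⊆ V_out and R' ⊆ V_in; symmetrically, for every undirected vertex cut (L', S', R') of G' with s_in ∈ L', we have L' ⊆ V_in and R' ⊆ V_out. -/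
open scoped Classical

/-- every undirected vertex cut `(L', S', R')` of `G'` with
`s_out ∈ L'` satisfies `L' ⊆ V_out` and `R' ⊆ V_in`; symmetrically, every
undirected vertex cut with `s_in ∈ L'` satisfies `L' ⊆ V_in` and `R' ⊆ V_out`. -/
theorem cut_sides_determined_by_source {V : Type*} [Fintype V] (E : Set (V × V))
    (hE : ∀ v : V, (v, v) ∉ E) (s : V) :
    (∀ L' S' R' : Set (V ⊕ V), IsUndirCut E L' S' R' → vOut s ∈ L' →
        L' ⊆ VOut V ∧ R' ⊆ VIn V) ∧
      (∀ L' S' R' : Set (V ⊕ V), IsUndirCut E L' S' R' → vIn s ∈ L' →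
        L' ⊆ VIn V ∧ R' ⊆ VOut V) := by
  constructor
  · intro L' S' R' hc hs
    have hR : R' ⊆ VIn V := by
      rintro (u | u) hu
      · exfalso
        rcases eq_or_ne s u with rfl | h
        · exact Set.disjoint_left.mp hc.disjLR hs hu
        · exact hc.sep _ hs _ hu h
      · exact ⟨u, rfl⟩
    refine ⟨?_, hR⟩
    obtain ⟨r, hr⟩ := hc.neR
    obtain ⟨v, rfl⟩ := hR hr
    rintro (u | u) hu
    · exact ⟨u, rfl⟩
    · exfalso
      rcases eq_or_ne u v with rfl | h
      · exact Set.disjoint_left.mp hc.disjLR hu hr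
      · exact hc.sep _ hu _ hr h
  · intro L' S' R' hc hs
    have hR : R' ⊆ VOut V := by
      rintro (u | u) hu
      · exact ⟨u, rfl⟩
      · exfalso
        rcases eq_or_ne s u with rfl | h
        · exact Set.disjoint_left.mp hc.disjLR hs hu
        · exact hc.sep _ hs _ hu h
    refine ⟨?_, hR⟩
    obtain ⟨r, hr⟩ := hc.neR
    obtain ⟨v, rfl⟩ := hR hr
    rintro (u | u) hu
    · exfalso
      rcases eq_or_ne u v with rfl | h
      · exact Set.disjoint_left.mp hc.disjLR hu hr
      · exact hc.sep _ hu _ hr h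
    · exact ⟨u, rfl⟩
end

section
/- Let G = (V, E, w) be a finite directed graph with positive integer vertex weights, let G' be its reduction graph, and let t ∈ V. Assume there exists a directed vertex cut (L, S, R) of G with t ∈ R. Then κ_G(∗, t) = κ_{G'}(t_in) − w(V), where κ_G(∗, t) is the minimum weight w(S) over all directed vertex cuts (L, S, R) of G with t ∈ R, and κ_{G'}(t_in) is the minimum weight w'(S') over all undirected vertex cuts (L', S', R') of G' with t_in ∈ L'. -/
open scoped Classical

lemma wt'_eq_s12 {V : Type*} [Fintype V] (w : V → ℕ) (X : Set (V ⊕ V)) :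
    wt' w X = wt w (Sum.inl ⁻¹' X) + wt w (Sum.inr ⁻¹' X) := by
  classical
  unfold wt'
  rw [show X.toFinite.toFinset = Finset.univ.filter (fun v => v ∈ X) from by
    ext v; simp [Set.Finite.mem_toFinset, Set.mem_setOf_eq], Finset.sum_filter, Fintype.sum_sum_type, wt_eq, wt_eq]
  simp [Set.mem_preimage]

lemma wt_compl_add {V : Type*} [Fintype V] (w : V → ℕ) {A B : Set V}
    (h : Disjoint A B) :
    wt w Aᶜ + wt w Bᶜ = wt w (A ∪ B)ᶜ + wt w Set.univ := by
  classical
  simp only [wt_eq]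
  rw [← Finset.sum_add_distrib, ← Finset.sum_add_distrib]
  apply Finset.sum_congr rfl
  intro v _
  have hd : v ∈ A → v ∉ B := fun hA => Set.disjoint_left.mp h hA
  by_cases hA : v ∈ A <;> by_cases hB : v ∈ B
  · exact absurd hB (hd hA)
  · simp [hA, hB, Set.mem_compl_iff, Set.mem_union]
  · simp [hA, hB, Set.mem_compl_iff, Set.mem_union]
  · simp [hA, hB, Set.mem_compl_iff, Set.mem_union]

/-- single-sink case of Corollary
`corollary:single-source-min-cut-G'-G`: if `G` has a directed vertex cut with
`t ∈ R`, then `κ_G(∗, t) = κ_{G'}(t_in) - w(V)`. -/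
theorem single_sink_min_cut_reduction {V : Type*} [Fintype V] (E : Set (V × V))
    (hE : ∀ v : V, (v, v) ∉ E) (w : V → ℕ) (hw : ∀ v : V, 1 ≤ w v) (t : V)
    (hex : ∃ L S R : Set V, IsDirCut E L S R ∧ t ∈ R) :
    sInf {k : ℕ | ∃ L S R : Set V, IsDirCut E L S R ∧ t ∈ R ∧ k = wt w S} =
      sInf {k : ℕ | ∃ L' S' R' : Set (V ⊕ V), IsUndirCut E L' S' R' ∧
          vIn t ∈ L' ∧ k = wt' w S'} - wt w Set.univ := by
  classical
  set W := wt w Set.univ with hW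
  set A : Set ℕ := {k : ℕ | ∃ L S R : Set V, IsDirCut E L S R ∧ t ∈ R ∧ k = wt w S} with hA
  set B : Set ℕ := {k : ℕ | ∃ L' S' R' : Set (V ⊕ V), IsUndirCut E L' S' R' ∧
      vIn t ∈ L' ∧ k = wt' w S'} with hB
  -- Step 1: dir cut → undir cut
  have step1 : ∀ k ∈ A, k + W ∈ B := by
    rintro k ⟨L, S, R, cut, htR, rfl⟩
    refine ⟨Sum.inr '' R, (Sum.inr '' R ∪ Sum.inl '' L)ᶜ, Sum.inl '' L, ?_, ⟨t, htR, rfl⟩, ?_⟩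
    · constructor
      · rw [Set.disjoint_left]; intro x hx hx'
        exact hx' (Set.mem_union_left _ hx)
      · rw [Set.disjoint_left]; rintro x ⟨v, hv, rfl⟩ ⟨u, hu, h⟩
        exact Sum.inl_ne_inr h
      · rw [Set.disjoint_left]; intro x hx hx'
        exact hx (Set.mem_union_right _ hx')
      · ext x; simp only [Set.mem_union, Set.mem_compl_iff, Set.mem_univ, iff_true]
        tauto
      · exact ⟨Sum.inr t, t, htR, rfl⟩
      · obtain ⟨u, hu⟩ := cut.neL; exact ⟨Sum.inl u, u, hu, rfl⟩
      · rintro x ⟨v, hv, rfl⟩ y ⟨u, hu, rfl⟩ hadj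
        rcases hadj with rfl | he
        · exact Set.disjoint_left.mp cut.disjLR hu hv
        · exact cut.sep u hu v hv he
    · -- weight computation
      have hS : S = (L ∪ R)ᶜ := by
        ext v
        have hv : v ∈ L ∪ S ∪ R := cut.cover ▸ Set.mem_univ v
        simp only [Set.mem_compl_iff, Set.mem_union]
        constructor
        · intro hvS
          exact fun h => h.elim (fun hL => Set.disjoint_left.mp cut.disjLS hL hvS)
            (fun hR => Set.disjoint_left.mp cut.disjSR hvS hR)
        · intro h
          rcases hv with (hL | hS') | hR
          · exact absurd (Or.inl hL) h
          · exact hS'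
          · exact absurd (Or.inr hR) h
      have h1 : Sum.inl ⁻¹' ((Sum.inr '' R ∪ Sum.inl '' L)ᶜ : Set (V ⊕ V)) = Lᶜ := by
        ext v; simp [Sum.inl.injEq]
      have h2 : Sum.inr ⁻¹' ((Sum.inr '' R ∪ Sum.inl '' L)ᶜ : Set (V ⊕ V)) = Rᶜ := by
        ext v; simp [Sum.inr.injEq]
      rw [wt'_eq_s12, h1, h2]
      have := wt_compl_add w cut.disjLR
      rw [hS]
      omega
  -- Step 2: undir cut with t_in ∈ L' → dir cut
  have step2 : ∀ k ∈ B, ∃ j ∈ A, k = j + W := by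
    rintro k ⟨L', S', R', cut, htL, rfl⟩
    have hR'out : ∀ x ∈ R', ∃ u : V, x = Sum.inl u := by
      rintro (u | v) hx
      · exact ⟨u, rfl⟩
      · exfalso
        by_cases hvt : v = t
        · subst hvt; exact Set.disjoint_left.mp cut.disjLR htL hx
        · exact cut.sep _ htL _ hx (fun h => hvt h.symm)
    obtain ⟨x0, hx0⟩ := cut.neR
    obtain ⟨u0, rfl⟩ := hR'out x0 hx0
    have hL'in : ∀ x ∈ L', ∃ v : V, x = Sum.inr v := by
      rintro (u | v) hx
      · exfalso
        by_cases huu : u = u0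
        · subst huu; exact Set.disjoint_left.mp cut.disjLR hx hx0
        · exact cut.sep _ hx _ hx0 huu
      · exact ⟨v, rfl⟩
    set Ld : Set V := Sum.inl ⁻¹' R' with hLd
    set Rd : Set V := Sum.inr ⁻¹' L' with hRd
    have hdisj : Disjoint Ld Rd := by
      rw [Set.disjoint_left]; intro u hu hu'
      exact cut.sep _ hu' _ hu (Or.inl rfl)
    refine ⟨wt w (Ld ∪ Rd)ᶜ, ⟨Ld, (Ld ∪ Rd)ᶜ, Rd, ?_, htL, rfl⟩, ?_⟩
    · constructor
      · rw [Set.disjoint_left]; intro x hx hx'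
        exact hx' (Set.mem_union_left _ hx)
      · exact hdisj
      · rw [Set.disjoint_left]; intro x hx hx'
        exact hx (Set.mem_union_right _ hx')
      · ext x; simp only [Set.mem_union, Set.mem_compl_iff, Set.mem_univ, iff_true]
        tauto
      · exact ⟨u0, hx0⟩
      · exact ⟨t, htL⟩
      · intro u hu v hv he
        exact cut.sep _ hv _ hu (Or.inr he)
    · -- weight
      have hS' : S' = (L' ∪ R')ᶜ := by
        ext x
        have hx : x ∈ L' ∪ S' ∪ R' := cut.cover ▸ Set.mem_univ x
        simp only [Set.mem_compl_iff, Set.mem_union]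
        constructor
        · intro hxS
          exact fun h => h.elim (fun hL => Set.disjoint_left.mp cut.disjLS hL hxS)
            (fun hR => Set.disjoint_left.mp cut.disjSR hxS hR)
        · intro h
          rcases hx with (hL | hS0) | hR
          · exact absurd (Or.inl hL) h
          · exact hS0
          · exact absurd (Or.inr hR) h
      have h1 : Sum.inl ⁻¹' S' = Ldᶜ := by
        rw [hS']
        ext u
        simp only [Set.mem_preimage, Set.mem_compl_iff, Set.mem_union, hLd]
        constructor
        · intro h hL; exact h (Or.inr hL)
        · intro h hh
          rcases hh with hL | hR
          · obtain ⟨v, hv⟩ := hL'in _ hL; exact Sum.inl_ne_inr hv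
          · exact h hR
      have h2 : Sum.inr ⁻¹' S' = Rdᶜ := by
        rw [hS']
        ext v
        simp only [Set.mem_preimage, Set.mem_compl_iff, Set.mem_union, hRd]
        constructor
        · intro h hL; exact h (Or.inl hL)
        · intro h hh
          rcases hh with hL | hR
          · exact h hL
          · obtain ⟨u, hu⟩ := hR'out _ hR; exact Sum.inr_ne_inl hu
      rw [wt'_eq_s12, h1, h2]
      have := wt_compl_add w hdisj
      omega
  -- Combine
  obtain ⟨L, S, R, cut, htR⟩ := hex
  have hAne : A.Nonempty := ⟨wt w S, L, S, R, cut, htR, rfl⟩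
  have haA : sInf A ∈ A := Nat.sInf_mem hAne
  have hBne : B.Nonempty := ⟨sInf A + W, step1 _ haA⟩
  have hbB : sInf B ∈ B := Nat.sInf_mem hBne
  obtain ⟨j, hjA, hj⟩ := step2 _ hbB
  have h1 : sInf A ≤ j := Nat.sInf_le hjA
  have h2 : sInf B ≤ sInf A + W := Nat.sInf_le (step1 _ haA)
  omega
end

section
/- Let G = (V, E, w) be a finite directed graph with positive integer vertex weights and let G' be its reduction graph. Let (L', S', R') be a minimum-weight undirected vertex cut of G' with L' ⊆ V_out and R' ⊆ V_in, and set R = { v ∈ V : v_in ∈ R' }, L = { v ∈ V : v_out ∈ L' }, and X = V \ (L ∪ R ∪ N^in_G(R)). Then S' = N_{G'}(R'), and (L ∪ X, N^in_G(R), R) is a directed vertex cut of G of weight w(N^in_G(R)) = w'(S') − w(V). -/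
open scoped Classical

section Aux

lemma adj'_symm {V : Type*} {E : Set (V × V)} {x y : V ⊕ V} (h : adj' E x y) :
    adj' E y x := by
  cases x <;> cases y <;> first | exact h | exact Ne.symm h

lemma wsum_union {α : Type*} [Fintype α] (f : α → ℕ) {A B : Set α} (h : Disjoint A B) :
    ∑ x ∈ (A ∪ B).toFinite.toFinset, f x =
      ∑ x ∈ A.toFinite.toFinset, f x + ∑ x ∈ B.toFinite.toFinset, f x := by
  classical
  rw [show (A ∪ B).toFinite.toFinset = A.toFinite.toFinset ∪ B.toFinite.toFinset from by
      ext x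
      simp only [Set.Finite.mem_toFinset, Finset.mem_union, Set.mem_union]]
  exact Finset.sum_union (by
    rw [Finset.disjoint_left]
    intro x hx hx'
    exact Set.disjoint_left.mp h (by simpa using hx) (by simpa using hx'))

lemma wsum_diff_singleton {α : Type*} [Fintype α] (f : α → ℕ) {A : Set α} {s : α}
    (hs : s ∈ A) :
    ∑ x ∈ (A \ {s}).toFinite.toFinset, f x + f s = ∑ x ∈ A.toFinite.toFinset, f x := by
  classical
  rw [show (A \ {s}).toFinite.toFinset = A.toFinite.toFinset.erase s from by
      ext x
      simp only [Set.Finite.mem_toFinset, Finset.mem_erase, Set.mem_diff,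
        Set.mem_singleton_iff]
      tauto]
  exact Finset.sum_erase_add _ _ (by simpa using hs)

lemma wsum_image {α β : Type*} [Fintype α] [Fintype β] (f : β → ℕ) (g : α → β)
    (hg : Function.Injective g) (A : Set α) :
    ∑ x ∈ (g '' A).toFinite.toFinset, f x = ∑ x ∈ A.toFinite.toFinset, f (g x) := by
  classical
  rw [show (g '' A).toFinite.toFinset = A.toFinite.toFinset.image g from by
      ext x
      simp only [Set.Finite.mem_toFinset, Finset.mem_image, Set.mem_image]]
  exact Finset.sum_image (fun a _ b _ hab => hg hab)

end Aux

/-- for a minimum-weight undirected vertex cut `(L', S', R')`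
of `G'` with `L' ⊆ V_out` and `R' ⊆ V_in`, setting `R = {v : v_in ∈ R'}`,
`L = {v : v_out ∈ L'}` and `X = V \ (L ∪ R ∪ N^in_G(R))`, we have
`S' = N_{G'}(R')`, and `(L ∪ X, N^in_G(R), R)` is a directed vertex cut of `G`
of weight `w(N^in_G(R)) = w'(S') - w(V)`. -/
theorem min_cut_extraction {V : Type*} [Fintype V] (E : Set (V × V))
    (hE : ∀ v : V, (v, v) ∉ E) (w : V → ℕ) (hw : ∀ v : V, 1 ≤ w v)
    (L' S' R' : Set (V ⊕ V)) (hcut : IsUndirCut E L' S' R')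
    (hmin : ∀ L2 S2 R2 : Set (V ⊕ V), IsUndirCut E L2 S2 R2 → wt' w S' ≤ wt' w S2)
    (hL : L' ⊆ VOut V) (hR : R' ⊆ VIn V) :
    S' = nbr' E R' ∧
      IsDirCut E
        ({v : V | vOut v ∈ L'} ∪
          (Set.univ \ ({v : V | vOut v ∈ L'} ∪ {v : V | vIn v ∈ R'} ∪
            NIn E {v : V | vIn v ∈ R'})))
        (NIn E {v : V | vIn v ∈ R'}) {v : V | vIn v ∈ R'} ∧
      wt w (NIn E {v : V | vIn v ∈ R'}) = wt' w S' - wt w Set.univ := by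
  classical
  obtain ⟨l0, hl0⟩ := hcut.neL
  obtain ⟨r0, hr0⟩ := hcut.neR
  obtain ⟨u0, rfl⟩ := hL hl0
  obtain ⟨v0, rfl⟩ := hR hr0
  set Rv : Set V := {v : V | vIn v ∈ R'} with hRvdef
  set Lv : Set V := {v : V | vOut v ∈ L'} with hLvdef
  set N : Set V := NIn E Rv with hNdef
  -- basic coverage
  have hcov : ∀ x : V ⊕ V, x ∈ L' ∪ S' ∪ R' := fun x => hcut.cover ▸ Set.mem_univ x
  -- Part 1 : S' = nbr' E R'
  have hpart1 : S' = nbr' E R' := by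
    apply Set.Subset.antisymm
    · intro s hs
      by_contra hns
      have hsR : s ∉ R' := fun h => Set.disjoint_left.mp hcut.disjSR hs h
      have hnadj : ¬ ∃ x ∈ R', adj' E x s := by
        intro h
        exact hns ⟨hsR, h⟩
      have hsL : s ∉ L' := fun h => Set.disjoint_left.mp hcut.disjLS h hs
      have hcut2 : IsUndirCut E (insert s L') (S' \ {s}) R' := by
        refine ⟨?_, ?_, ?_, ?_, ⟨s, Set.mem_insert _ _⟩, hcut.neR, ?_⟩
        · rw [Set.disjoint_left]
          intro x hx hx'
          rcases Set.mem_insert_iff.mp hx with h | h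
          · exact hx'.2 (by simpa using h)
          · exact Set.disjoint_left.mp hcut.disjLS h hx'.1
        · rw [Set.disjoint_left]
          intro x hx hx'
          rcases Set.mem_insert_iff.mp hx with h | h
          · exact hsR (h ▸ hx')
          · exact Set.disjoint_left.mp hcut.disjLR h hx'
        · exact hcut.disjSR.mono_left Set.diff_subset
        · apply Set.eq_univ_of_forall
          intro x
          have hx := hcov x
          simp only [Set.mem_union, Set.mem_insert_iff, Set.mem_diff,
            Set.mem_singleton_iff] at hx ⊢
          by_cases hxs : x = s
          · tauto
          · tauto
        · intro x hx y hy
          rcases Set.mem_insert_iff.mp hx with h | h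
          · subst h
            exact fun hadj => hnadj ⟨y, hy, adj'_symm hadj⟩
          · exact hcut.sep x h y hy
      have hle := hmin _ _ _ hcut2
      have heq : wt' w (S' \ {s}) + Sum.elim w w s = wt' w S' :=
        wsum_diff_singleton _ hs
      have hpos : 1 ≤ Sum.elim w w s := by cases s <;> exact hw _
      unfold wt' at *
      omega
    · rintro y ⟨hyR, x, hx, hadj⟩
      have hyL : y ∉ L' := fun h => hcut.sep y h x hx (adj'_symm hadj)
      rcases hcov y with (h | h) | h
      · exact absurd h hyL
      · exact h
      · exact absurd h hyR
  refine ⟨hpart1, ?_, ?_⟩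
  · -- directed cut
    have hLR : ∀ v : V, vOut v ∈ L' → v ∉ Rv := fun v h1 h2 =>
      hcut.sep _ h1 _ h2 (Or.inl rfl)
    have hLN : ∀ v : V, vOut v ∈ L' → v ∉ N := by
      rintro v h1 ⟨_, r, hr, he⟩
      exact hcut.sep _ h1 _ hr (Or.inr he)
    have hNR : ∀ v : V, v ∈ N → v ∉ Rv := fun v hv => hv.1
    refine ⟨?_, ?_, ?_, ?_, ?_, ?_, ?_⟩
    · rw [Set.disjoint_left]
      rintro v (hv | hv) hvN
      · exact hLN v hv hvN
      · exact hv.2 (Or.inr hvN)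
    · rw [Set.disjoint_left]
      rintro v (hv | hv) hvR
      · exact hLR v hv hvR
      · exact hv.2 (Or.inl (Or.inr hvR))
    · rw [Set.disjoint_left]
      intro v hv hvR
      exact hNR v hv hvR
    · apply Set.eq_univ_of_forall
      intro v
      simp only [Set.mem_union, Set.mem_diff, Set.mem_univ, true_and]
      tauto
    · exact ⟨u0, Or.inl hl0⟩
    · exact ⟨v0, hr0⟩
    · rintro u hu v hv he
      have huR : u ∉ Rv := by
        rcases hu with h | h
        · exact hLR u h
        · exact fun hr => h.2 (Or.inl (Or.inr hr))
      have huN : u ∈ N := ⟨huR, v, hv, he⟩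
      rcases hu with h | h
      · exact hLN u h huN
      · exact h.2 (Or.inr huN)
  · -- weights
    have hS'img : S' = (Sum.inl '' (Rv ∪ N)) ∪ (Sum.inr '' (Set.univ \ Rv)) := by
      rw [hpart1]
      ext x
      cases x with
      | inl v =>
        constructor
        · rintro ⟨_, y, hy, hadj⟩
          obtain ⟨r, hr⟩ := hR hy
          subst hr
          have hrR : r ∈ Rv := hy
          rcases hadj with h | h
          · exact Or.inl ⟨v, Or.inl (h ▸ hrR), rfl⟩
          · by_cases hvR : v ∈ Rv
            · exact Or.inl ⟨v, Or.inl hvR, rfl⟩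
            · exact Or.inl ⟨v, Or.inr ⟨hvR, r, hrR, h⟩, rfl⟩
        · rintro (⟨u, hu, hux⟩ | ⟨u, _, hux⟩)
          · obtain rfl : u = v := Sum.inl_injective hux
            have hvnR : (Sum.inl u : V ⊕ V) ∉ R' := by
              intro h
              obtain ⟨r, hr⟩ := hR h
              exact absurd hr (by simp)
            rcases hu with hu | hu
            · exact ⟨hvnR, Sum.inr u, hu, Or.inl rfl⟩
            · obtain ⟨_, r, hrR, he⟩ := hu
              exact ⟨hvnR, Sum.inr r, hrR, Or.inr he⟩
          · exact absurd hux (by simp)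
      | inr v =>
        constructor
        · rintro ⟨hnv, _⟩
          exact Or.inr ⟨v, ⟨trivial, hnv⟩, rfl⟩
        · rintro (⟨u, _, hux⟩ | ⟨u, hu, hux⟩)
          · exact absurd hux (by simp)
          · obtain rfl : u = v := Sum.inr_injective hux
            have hvnR : (Sum.inr u : V ⊕ V) ∉ R' := hu.2
            refine ⟨hvnR, Sum.inr v0, hr0, ?_⟩
            intro h
            exact hvnR (h ▸ hr0)
    have hdisj1 : Disjoint (Sum.inl '' (Rv ∪ N) : Set (V ⊕ V)) (Sum.inr '' (Set.univ \ Rv)) := by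
      rw [Set.disjoint_left]
      rintro x ⟨a, _, rfl⟩ ⟨b, _, hb⟩
      exact absurd hb (by simp)
    have hRN : Disjoint Rv N := by
      rw [Set.disjoint_left]
      exact fun v hv hv' => hv'.1 hv
    have hRdisj : Disjoint Rv (Set.univ \ Rv) := Set.disjoint_sdiff_right
    have huniv : (Set.univ : Set V) = Rv ∪ (Set.univ \ Rv) :=
      (Set.union_diff_cancel (Set.subset_univ Rv)).symm
    have h1 : wt' w S' = wt w (Rv ∪ N) + wt w (Set.univ \ Rv) := by
      rw [hS'img]
      unfold wt' wt
      rw [wsum_union _ hdisj1, wsum_image _ _ Sum.inl_injective, wsum_image _ _ Sum.inr_injective]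
      simp
    have h2 : wt w (Rv ∪ N) = wt w Rv + wt w N := wsum_union _ hRN
    have h3 : wt w Set.univ = wt w Rv + wt w (Set.univ \ Rv) := by
      conv_lhs => rw [huniv]
      exact wsum_union _ hRdisj
    omega
end
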